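/- arXiv:2108.00757 — 2 statements merged into one kernel-verified Lean document; each statement's English description precedes it below -/
import Mathlib

section
/- Let G be a topological group, α: ℝ → Aut(G) a homomorphism, and suppose every ground state representation of (G,α) is strict. Then for any two ground state representations (π₁,H₁), (π₂,H₂) of (G,α) and any unitary G⁰-equivalence V: H₁⁰ → H₂⁰ between the minimal energy subspaces, there exists a unitary G-equivalence Ṽ: H₁ → H₂ extending V; moreover Ṽ is unique. -/
/-- The space of fixed vectors of a one-parameter group of operators; for a positive
energy representation `U_t = e^{itH₀}` this is the minimal energy subspace `ker H₀`. -/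
def fixedPts {H : Type*} [NormedAddCommGroup H] [InnerProductSpace ℂ H]
    (U : ℝ → H →L[ℂ] H) : Submodule ℂ H where
  carrier := {x | ∀ t : ℝ, U t x = x}
  add_mem' := fun ha hb t => by simp [map_add, ha t, hb t]
  zero_mem' := fun t => by simp
  smul_mem' := fun c x hx t => by simp [map_smul, hx t]

/-- A strongly continuous unitary one-parameter group `U_t = e^{itH₀}` has non-negative
generator `H₀ ≥ 0` iff `∫ f(t) ⟨x, U_t x⟩ dt = 0` for every integrable `f` whose Fourier
transform `f̂(s) = ∫ f(t) e^{ist} dt` vanishes on `[0,∞)`. -/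
def NonnegGen {H : Type*} [NormedAddCommGroup H] [InnerProductSpace ℂ H]
    (U : ℝ → H →L[ℂ] H) : Prop :=
  ∀ f : ℝ → ℂ, MeasureTheory.Integrable f →
    (∀ s : ℝ, 0 ≤ s → (∫ t : ℝ, f t * Complex.exp (Complex.I * (s * t))) = 0) →
    ∀ x : H, (∫ t : ℝ, f t * (inner ℂ x (U t x) : ℂ)) = 0

/-- A ground state representation of `(G,α)`: a unitary representation `π` of `G`
together with a strongly continuous unitary one-parameter group `U_t = e^{itH₀}` with
`H₀ ≥ 0`, satisfying the covariance relation `U_t π(g) = π(α_t g) U_t`, such that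
`π(G)·(ker H₀)` is total in `H` (here `ker H₀ = fixedPts U`). -/
def IsGroundStateRep {G : Type*} [Group G]
    {H : Type*} [NormedAddCommGroup H] [InnerProductSpace ℂ H] [CompleteSpace H]
    (α : ℝ → G → G) (π : G → H →L[ℂ] H) (U : ℝ → H →L[ℂ] H) : Prop :=
  π 1 = 1 ∧ (∀ g h : G, π (g * h) = π g * π h) ∧
  (∀ g : G, π g ∈ unitary (H →L[ℂ] H)) ∧
  U 0 = 1 ∧ (∀ s t : ℝ, U (s + t) = U s * U t) ∧
  (∀ t : ℝ, U t ∈ unitary (H →L[ℂ] H)) ∧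
  (∀ x : H, Continuous fun t : ℝ => U t x) ∧
  NonnegGen U ∧
  (∀ (t : ℝ) (g : G), U t * π g = π (α t g) * U t) ∧
  (Submodule.span ℂ
    {y : H | ∃ (g : G) (x : H), x ∈ fixedPts U ∧ y = π g x}).topologicalClosure = ⊤

/-- Strictness of a ground state representation: every operator on the minimal energy
space `H⁰ = fixedPts U` (encoded as the corresponding corner of `B(H)`) commuting with
the `G⁰`-action (`G⁰ = Fix α`) extends to an operator on `H` commuting with `π(G)`. -/
def IsStrict {G : Type*} [Group G]
    {H : Type*} [NormedAddCommGroup H] [InnerProductSpace ℂ H] [CompleteSpace H]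
    (α : ℝ → G → G) (π : G → H →L[ℂ] H) (U : ℝ → H →L[ℂ] H) : Prop :=
  ∀ B : H →L[ℂ] H,
    (∀ x : H, B x ∈ fixedPts U) →
    (∀ x ∈ (fixedPts U)ᗮ, B x = 0) →
    (∀ g : G, (∀ t : ℝ, α t g = g) → ∀ x ∈ fixedPts U, B (π g x) = π g (B x)) →
    ∃ A : H →L[ℂ] H,
      (∀ g : G, A * π g = π g * A) ∧ ∀ x ∈ fixedPts U, A x = B x

/-!
The direct sum `π₁ ⊕ π₂` is again a ground state representation, and its strictness extends the
`G⁰`-equivariant operator `(ξ₁, ξ₂) ↦ (0, V ξ₁)` on `H₁⁰ ⊕ H₂⁰` to an operator commuting with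
`π₁ ⊕ π₂`; its `H₁ → H₂` corner is a `G`-intertwiner `T` extending `V`. As `π(G)H⁰` is total,
an intertwiner is determined by its values on `H⁰`. By covariance `U₂(t)* T U₁(t)` is again an
intertwiner, and it agrees with `T` on `H₁⁰`, so `T` commutes with the time evolutions. Hence
`T*` maps `H₂⁰` into `H₁⁰`, where it equals `V⁻¹`. Now `T*T` and `TT*` are intertwiners
restricting to the identity on the minimal energy spaces, so `T` is unitary; uniqueness is
totality once more.
-/

open ContinuousLinearMap MeasureTheory
open scoped InnerProductSpace

theorem WithLp.prod_ext {p : ENNReal} {α β : Type*} {x y : WithLp p (α × β)}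
    (h₁ : x.fst = y.fst) (h₂ : x.snd = y.snd) : x = y :=
  (WithLp.ext_iff _).2 (Prod.ext h₁ h₂)

theorem ContinuousLinearMap.apply_mem_of_topologicalClosure_span_eq_top {𝕜 E F : Type*}
    [NormedField 𝕜] [NormedAddCommGroup E] [NormedSpace 𝕜 E] [NormedAddCommGroup F]
    [NormedSpace 𝕜 F] (f : E →L[𝕜] F) {S : Set E}
    (hS : (Submodule.span 𝕜 S).topologicalClosure = ⊤) {M : Submodule 𝕜 F}
    (hM : IsClosed (M : Set F)) (hSM : ∀ x ∈ S, f x ∈ M) (x : E) : f x ∈ M := by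
  have : (Submodule.span 𝕜 S).topologicalClosure ≤ M.comap (f : E →ₗ[𝕜] F) :=
    Submodule.topologicalClosure_minimal _ (Submodule.span_le.2 hSM) (hM.preimage f.continuous)
  exact this (hS ▸ Submodule.mem_top)

theorem star_mul_eq_mul_star_of_mem_unitary {R : Type*} [Monoid R] [StarMul R] {u a b : R}
    (hu : u ∈ unitary R) (h : u * a = b * u) : star u * b = a * star u :=
  calc star u * b = star u * (b * u) * star u := by
        rw [mul_assoc, mul_assoc, Unitary.mul_star_self_of_mem hu, mul_one]
    _ = a * star u := by rw [← h, ← mul_assoc, Unitary.star_mul_self_of_mem hu, one_mul]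

section Adjoint

variable {H₁ H₂ : Type*} [NormedAddCommGroup H₁] [InnerProductSpace ℂ H₁] [CompleteSpace H₁]
  [NormedAddCommGroup H₂] [InnerProductSpace ℂ H₂] [CompleteSpace H₂]

theorem adjoint_intertwines_of_mem_unitary {u₁ : H₁ →L[ℂ] H₁} {u₂ : H₂ →L[ℂ] H₂}
    (hu₁ : u₁ ∈ unitary (H₁ →L[ℂ] H₁)) (hu₂ : u₂ ∈ unitary (H₂ →L[ℂ] H₂)) {T : H₁ →L[ℂ] H₂}
    (hT : ∀ x, T (u₁ x) = u₂ (T x)) (y : H₂) : adjoint T (u₂ y) = u₁ (adjoint T y) := by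
  refine ext_inner_right ℂ fun z => ?_
  calc ⟪adjoint T (u₂ y), z⟫_ℂ = ⟪u₂ y, T z⟫_ℂ := adjoint_inner_left _ _ _
    _ = ⟪u₂ y, u₂ (T (star u₁ z))⟫_ℂ := by
      rw [← hT, ← mul_apply_eq_comp, Unitary.mul_star_self_of_mem hu₁, one_apply_eq_self]
    _ = ⟪y, T (star u₁ z)⟫_ℂ := inner_map_map_of_mem_unitary hu₂ _ _
    _ = ⟪adjoint T y, star u₁ z⟫_ℂ := (adjoint_inner_left _ _ _).symm
    _ = ⟪u₁ (adjoint T y), z⟫_ℂ := by rw [star_eq_adjoint, adjoint_inner_right]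

theorem adjoint_apply_eq_symm_of_extends {K₁ : Submodule ℂ H₁} {K₂ : Submodule ℂ H₂}
    (V : K₁ ≃ₗᵢ[ℂ] K₂) {T : H₁ →L[ℂ] H₂} (hTV : ∀ x : K₁, T x = V x)
    (hT : ∀ y ∈ K₂, adjoint T y ∈ K₁) (y : K₂) : adjoint T y = V.symm y := by
  have : (⟨adjoint T y, hT y y.2⟩ : K₁) = V.symm y := ext_inner_right ℂ fun w => by
    calc ⟪(⟨adjoint T y, hT y y.2⟩ : K₁), w⟫_ℂ = ⟪(y : H₂), T w⟫_ℂ := adjoint_inner_left _ _ _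
      _ = ⟪y, V w⟫_ℂ := by rw [hTV]; rfl
      _ = ⟪V.symm y, w⟫_ℂ := by rw [← V.inner_map_map (V.symm y) w, V.apply_symm_apply]
  exact congrArg Subtype.val this

end Adjoint

theorem integrable_mul_inner_of_mem_unitary {H : Type*} [NormedAddCommGroup H]
    [InnerProductSpace ℂ H] [CompleteSpace H] {U : ℝ → H →L[ℂ] H}
    (hU : ∀ t, U t ∈ unitary (H →L[ℂ] H)) (hcont : ∀ x, Continuous fun t => U t x)
    {f : ℝ → ℂ} (hf : Integrable f) (x : H) : Integrable fun t => f t * ⟪x, U t x⟫_ℂ := by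
  refine hf.mul_bdd (c := ‖x‖ * ‖x‖)
    (continuous_const.inner (hcont x)).aestronglyMeasurable (ae_of_all _ fun t => ?_)
  calc ‖⟪x, U t x⟫_ℂ‖ ≤ ‖x‖ * ‖U t x‖ := norm_inner_le_norm _ _
    _ = ‖x‖ * ‖x‖ := by rw [norm_map_of_mem_unitary (hU t)]

section FixedPoints

variable {H : Type*} [NormedAddCommGroup H] [InnerProductSpace ℂ H]

theorem isClosed_fixedPts (U : ℝ → H →L[ℂ] H) : IsClosed (fixedPts U : Set H) := by
  show IsClosed {x | ∀ t, U t x = x}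
  rw [Set.ofPred_forall]
  exact isClosed_iInter fun t => isClosed_eq (U t).continuous continuous_id

instance [CompleteSpace H] (U : ℝ → H →L[ℂ] H) : CompleteSpace (fixedPts U) :=
  (isClosed_fixedPts U).completeSpace_coe

theorem map_mem_fixedPts_of_covariant {G : Type*} {α : ℝ → G → G} {π : G → H →L[ℂ] H}
    {U : ℝ → H →L[ℂ] H} (hcov : ∀ t g, U t * π g = π (α t g) * U t) {g : G}
    (hg : ∀ t, α t g = g) {x : H} (hx : x ∈ fixedPts U) : π g x ∈ fixedPts U := fun t => by
  rw [← mul_apply_eq_comp, hcov, hg, mul_apply_eq_comp, hx t]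

end FixedPoints

section GroundStateRep

variable {G : Type*} [Group G] {α : ℝ → G → G} {H : Type*} [NormedAddCommGroup H]
  [InnerProductSpace ℂ H] [CompleteSpace H] {π : G → H →L[ℂ] H} {U : ℝ → H →L[ℂ] H}

theorem IsGroundStateRep.mem_unitary (h : IsGroundStateRep α π U) (g : G) :
    π g ∈ unitary (H →L[ℂ] H) :=
  h.2.2.1 g

theorem IsGroundStateRep.U_mem_unitary (h : IsGroundStateRep α π U) (t : ℝ) :
    U t ∈ unitary (H →L[ℂ] H) :=
  h.2.2.2.2.2.1 t

theorem IsGroundStateRep.covariant (h : IsGroundStateRep α π U) (t : ℝ) (g : G) :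
    U t * π g = π (α t g) * U t :=
  h.2.2.2.2.2.2.2.2.1 t g

theorem IsGroundStateRep.total (h : IsGroundStateRep α π U) :
    (Submodule.span ℂ
      {y : H | ∃ (g : G) (x : H), x ∈ fixedPts U ∧ y = π g x}).topologicalClosure = ⊤ :=
  h.2.2.2.2.2.2.2.2.2

end GroundStateRep

section DirectSum

variable {H₁ H₂ : Type*} [NormedAddCommGroup H₁] [InnerProductSpace ℂ H₁]
  [NormedAddCommGroup H₂] [InnerProductSpace ℂ H₂]

noncomputable def sumOp (f : H₁ →L[ℂ] H₁) (g : H₂ →L[ℂ] H₂) :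
    WithLp 2 (H₁ × H₂) →L[ℂ] WithLp 2 (H₁ × H₂) :=
  (WithLp.prodContinuousLinearEquiv 2 ℂ H₁ H₂).symm.toContinuousLinearMap ∘L f.prodMap g ∘L
    (WithLp.prodContinuousLinearEquiv 2 ℂ H₁ H₂).toContinuousLinearMap

@[simp] theorem sumOp_fst (f : H₁ →L[ℂ] H₁) (g : H₂ →L[ℂ] H₂) (x : WithLp 2 (H₁ × H₂)) :
    (sumOp f g x).fst = f x.fst := rfl

@[simp] theorem sumOp_snd (f : H₁ →L[ℂ] H₁) (g : H₂ →L[ℂ] H₂) (x : WithLp 2 (H₁ × H₂)) :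
    (sumOp f g x).snd = g x.snd := rfl

theorem sumOp_mul (f f' : H₁ →L[ℂ] H₁) (g g' : H₂ →L[ℂ] H₂) :
    sumOp (f * f') (g * g') = sumOp f g * sumOp f' g' := rfl

theorem sumOp_one : sumOp (1 : H₁ →L[ℂ] H₁) (1 : H₂ →L[ℂ] H₂) = 1 := rfl

noncomputable def sumInl : H₁ →L[ℂ] WithLp 2 (H₁ × H₂) :=
  (WithLp.prodContinuousLinearEquiv 2 ℂ H₁ H₂).symm.toContinuousLinearMap ∘L
    ContinuousLinearMap.inl ℂ H₁ H₂

noncomputable def sumInr : H₂ →L[ℂ] WithLp 2 (H₁ × H₂) :=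
  (WithLp.prodContinuousLinearEquiv 2 ℂ H₁ H₂).symm.toContinuousLinearMap ∘L
    ContinuousLinearMap.inr ℂ H₁ H₂

@[simp] theorem sumInl_fst (x : H₁) : (sumInl x : WithLp 2 (H₁ × H₂)).fst = x := rfl
@[simp] theorem sumInl_snd (x : H₁) : (sumInl x : WithLp 2 (H₁ × H₂)).snd = 0 := rfl
@[simp] theorem sumInr_snd (y : H₂) : (sumInr y : WithLp 2 (H₁ × H₂)).snd = y := rfl

@[simp] theorem sumOp_sumInl (f : H₁ →L[ℂ] H₁) (g : H₂ →L[ℂ] H₂) (x : H₁) :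
    sumOp f g (sumInl x) = sumInl (f x) :=
  WithLp.prod_ext rfl (map_zero g)

@[simp] theorem sumOp_sumInr (f : H₁ →L[ℂ] H₁) (g : H₂ →L[ℂ] H₂) (y : H₂) :
    sumOp f g (sumInr y) = sumInr (g y) :=
  WithLp.prod_ext (map_zero f) rfl

theorem mem_fixedPts_sumOp {U₁ : ℝ → H₁ →L[ℂ] H₁} {U₂ : ℝ → H₂ →L[ℂ] H₂}
    {x : WithLp 2 (H₁ × H₂)} :
    x ∈ fixedPts (fun t => sumOp (U₁ t) (U₂ t)) ↔
      x.fst ∈ fixedPts U₁ ∧ x.snd ∈ fixedPts U₂ :=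
  ⟨fun h => ⟨fun t => congrArg WithLp.fst (h t), fun t => congrArg WithLp.snd (h t)⟩,
    fun h t => WithLp.prod_ext (h.1 t) (h.2 t)⟩

theorem topologicalClosure_span_sumOp_eq_top {G : Type*} {π₁ : G → H₁ →L[ℂ] H₁}
    {π₂ : G → H₂ →L[ℂ] H₂} {U₁ : ℝ → H₁ →L[ℂ] H₁} {U₂ : ℝ → H₂ →L[ℂ] H₂}
    (htot₁ : (Submodule.span ℂ
      {y : H₁ | ∃ (g : G) (x : H₁), x ∈ fixedPts U₁ ∧ y = π₁ g x}).topologicalClosure = ⊤)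
    (htot₂ : (Submodule.span ℂ
      {y : H₂ | ∃ (g : G) (x : H₂), x ∈ fixedPts U₂ ∧ y = π₂ g x}).topologicalClosure = ⊤) :
    (Submodule.span ℂ {y : WithLp 2 (H₁ × H₂) | ∃ (g : G) (x : WithLp 2 (H₁ × H₂)),
      x ∈ fixedPts (fun t => sumOp (U₁ t) (U₂ t)) ∧
        y = sumOp (π₁ g) (π₂ g) x}).topologicalClosure = ⊤ := by
  set N := Submodule.span ℂ {y : WithLp 2 (H₁ × H₂) | ∃ (g : G) (x : WithLp 2 (H₁ × H₂)),
      x ∈ fixedPts (fun t => sumOp (U₁ t) (U₂ t)) ∧ y = sumOp (π₁ g) (π₂ g) x}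
  set M := N.topologicalClosure
  have hM : IsClosed (M : Set (WithLp 2 (H₁ × H₂))) := Submodule.isClosed_topologicalClosure _
  have hinl := sumInl.apply_mem_of_topologicalClosure_span_eq_top htot₁ hM <| by
    rintro _ ⟨g, x, hx, rfl⟩
    exact N.le_topologicalClosure (Submodule.subset_span
      ⟨g, sumInl x, mem_fixedPts_sumOp.2 ⟨hx, zero_mem _⟩, (sumOp_sumInl _ _ x).symm⟩)
  have hinr := sumInr.apply_mem_of_topologicalClosure_span_eq_top htot₂ hM <| by
    rintro _ ⟨g, x, hx, rfl⟩
    exact N.le_topologicalClosure (Submodule.subset_span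
      ⟨g, sumInr x, mem_fixedPts_sumOp.2 ⟨zero_mem _, hx⟩, (sumOp_sumInr _ _ x).symm⟩)
  refine eq_top_iff.2 fun z _ => ?_
  rw [show z = sumInl z.fst + sumInr z.snd from
    WithLp.prod_ext (add_zero _).symm (zero_add _).symm]
  exact M.add_mem (hinl _) (hinr _)

variable [CompleteSpace H₁] [CompleteSpace H₂]

theorem star_sumOp (f : H₁ →L[ℂ] H₁) (g : H₂ →L[ℂ] H₂) :
    star (sumOp f g) = sumOp (star f) (star g) := by
  simp only [star_eq_adjoint]
  refine ((eq_adjoint_iff _ _).2 fun x y => ?_).symm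
  simp [adjoint_inner_left]

theorem sumOp_mem_unitary {f : H₁ →L[ℂ] H₁} {g : H₂ →L[ℂ] H₂}
    (hf : f ∈ unitary (H₁ →L[ℂ] H₁)) (hg : g ∈ unitary (H₂ →L[ℂ] H₂)) :
    sumOp f g ∈ unitary (WithLp 2 (H₁ × H₂) →L[ℂ] WithLp 2 (H₁ × H₂)) := by
  rw [Unitary.mem_iff, star_sumOp, ← sumOp_mul, ← sumOp_mul, Unitary.star_mul_self_of_mem hf,
    Unitary.star_mul_self_of_mem hg, Unitary.mul_star_self_of_mem hf,
    Unitary.mul_star_self_of_mem hg, sumOp_one]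
  exact ⟨rfl, rfl⟩

theorem nonnegGen_sumOp {U₁ : ℝ → H₁ →L[ℂ] H₁} {U₂ : ℝ → H₂ →L[ℂ] H₂}
    (hU₁ : ∀ t, U₁ t ∈ unitary (H₁ →L[ℂ] H₁)) (hU₂ : ∀ t, U₂ t ∈ unitary (H₂ →L[ℂ] H₂))
    (hcont₁ : ∀ x, Continuous fun t => U₁ t x) (hcont₂ : ∀ x, Continuous fun t => U₂ t x)
    (hnn₁ : NonnegGen U₁) (hnn₂ : NonnegGen U₂) :
    NonnegGen fun t => sumOp (U₁ t) (U₂ t) := by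
  intro f hf hhat x
  simp only [WithLp.prod_inner_apply, WithLp.ofLp_fst, WithLp.ofLp_snd, sumOp_fst, sumOp_snd,
    mul_add]
  rw [integral_add (integrable_mul_inner_of_mem_unitary hU₁ hcont₁ hf _)
    (integrable_mul_inner_of_mem_unitary hU₂ hcont₂ hf _), hnn₁ f hf hhat, hnn₂ f hf hhat,
    add_zero]

theorem IsGroundStateRep.sum {G : Type*} [Group G] {α : ℝ → G → G} {π₁ : G → H₁ →L[ℂ] H₁}
    {π₂ : G → H₂ →L[ℂ] H₂} {U₁ : ℝ → H₁ →L[ℂ] H₁} {U₂ : ℝ → H₂ →L[ℂ] H₂}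
    (h₁ : IsGroundStateRep α π₁ U₁) (h₂ : IsGroundStateRep α π₂ U₂) :
    IsGroundStateRep α (fun g => sumOp (π₁ g) (π₂ g)) (fun t => sumOp (U₁ t) (U₂ t)) := by
  obtain ⟨one₁, mul₁, unit₁, zero₁, add₁, unitU₁, cont₁, nn₁, cov₁, tot₁⟩ := h₁
  obtain ⟨one₂, mul₂, unit₂, zero₂, add₂, unitU₂, cont₂, nn₂, cov₂, tot₂⟩ := h₂
  refine ⟨by simp only [one₁, one₂, sumOp_one], fun g h => by simp only [mul₁, mul₂, sumOp_mul],
    fun g => sumOp_mem_unitary (unit₁ g) (unit₂ g), by simp only [zero₁, zero₂, sumOp_one],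
    fun s t => by simp only [add₁, add₂, sumOp_mul],
    fun t => sumOp_mem_unitary (unitU₁ t) (unitU₂ t),
    fun x => ?_, nonnegGen_sumOp unitU₁ unitU₂ cont₁ cont₂ nn₁ nn₂,
    fun t g => by simp only [← sumOp_mul, cov₁, cov₂],
    topologicalClosure_span_sumOp_eq_top tot₁ tot₂⟩
  exact (WithLp.prodContinuousLinearEquiv 2 ℂ H₁ H₂).symm.continuous.comp
    ((cont₁ x.fst).prodMk (cont₂ x.snd))

end DirectSum

section Intertwiners

variable {G : Type*} {α : ℝ → G → G} {H₁ H₂ : Type*} [NormedAddCommGroup H₁]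
  [InnerProductSpace ℂ H₁] [NormedAddCommGroup H₂] [InnerProductSpace ℂ H₂]
  {π₁ : G → H₁ →L[ℂ] H₁} {π₂ : G → H₂ →L[ℂ] H₂} {U₁ : ℝ → H₁ →L[ℂ] H₁} {U₂ : ℝ → H₂ →L[ℂ] H₂}

theorem eq_of_intertwines_of_eqOn_fixedPts
    (htot : (Submodule.span ℂ
      {y : H₁ | ∃ (g : G) (x : H₁), x ∈ fixedPts U₁ ∧ y = π₁ g x}).topologicalClosure = ⊤)
    {Φ Ψ : H₁ →L[ℂ] H₂} (hΦ : ∀ g x, Φ (π₁ g x) = π₂ g (Φ x))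
    (hΨ : ∀ g x, Ψ (π₁ g x) = π₂ g (Ψ x)) (h : ∀ x ∈ fixedPts U₁, Φ x = Ψ x) : Φ = Ψ :=
  ContinuousLinearMap.ext_on (Submodule.dense_iff_topologicalClosure_eq_top.2 htot) <| by
    rintro _ ⟨g, x, hx, rfl⟩
    rw [hΦ, hΨ, h x hx]

variable [Group G] [CompleteSpace H₁] [CompleteSpace H₂]

theorem IsGroundStateRep.intertwines_U_of_mapsTo_fixedPts (h₁ : IsGroundStateRep α π₁ U₁)
    (h₂ : IsGroundStateRep α π₂ U₂) {T : H₁ →L[ℂ] H₂} (hT : ∀ g x, T (π₁ g x) = π₂ g (T x))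
    (hfix : ∀ x ∈ fixedPts U₁, T x ∈ fixedPts U₂) (t : ℝ) (x : H₁) :
    T (U₁ t x) = U₂ t (T x) := by
  have hU₂ := h₂.U_mem_unitary t
  have hconj : star (U₂ t) ∘L T ∘L U₁ t = T := by
    refine eq_of_intertwines_of_eqOn_fixedPts h₁.total (fun g x => ?_) hT fun x hx => ?_
    · have hcov₂ := star_mul_eq_mul_star_of_mem_unitary hU₂ (h₂.covariant t g)
      simp only [ContinuousLinearMap.comp_apply, ← mul_apply_eq_comp (U₁ t), h₁.covariant,
        mul_apply_eq_comp, hT, ← mul_apply_eq_comp (star (U₂ t)), hcov₂]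
    · rw [ContinuousLinearMap.comp_apply, ContinuousLinearMap.comp_apply, hx t,
        ← hfix x hx t, ← mul_apply_eq_comp, Unitary.star_mul_self_of_mem hU₂,
        one_apply_eq_self, hfix x hx t]
  calc T (U₁ t x) = U₂ t (star (U₂ t) (T (U₁ t x))) := by
        rw [← mul_apply_eq_comp, Unitary.mul_star_self_of_mem hU₂, one_apply_eq_self]
    _ = U₂ t (T x) := congrArg (U₂ t) (DFunLike.congr_fun hconj x)

theorem IsStrict.exists_intertwiner_extending
    (hstrict : IsStrict α (fun g => sumOp (π₁ g) (π₂ g)) (fun t => sumOp (U₁ t) (U₂ t)))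
    (hcov₁ : ∀ t g, U₁ t * π₁ g = π₁ (α t g) * U₁ t)
    (V : fixedPts U₁ →L[ℂ] fixedPts U₂)
    (hV : ∀ g : G, (∀ t : ℝ, α t g = g) →
      ∀ x y : fixedPts U₁, (y : H₁) = π₁ g (x : H₁) → (V y : H₂) = π₂ g (V x : H₂)) :
    ∃ T : H₁ →L[ℂ] H₂, (∀ g x, T (π₁ g x) = π₂ g (T x)) ∧ ∀ x : fixedPts U₁, T x = V x := by
  let P := (fixedPts U₁).orthogonalProjectionOnto
  let B : WithLp 2 (H₁ × H₂) →L[ℂ] WithLp 2 (H₁ × H₂) :=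
    sumInr ∘L (fixedPts U₂).subtypeL ∘L V ∘L P ∘L WithLp.fstL 2 ℂ H₁ H₂
  have hBmem (x : WithLp 2 (H₁ × H₂)) : B x ∈ fixedPts (fun t => sumOp (U₁ t) (U₂ t)) :=
    mem_fixedPts_sumOp.2 ⟨zero_mem _, (V (P x.fst)).2⟩
  have hBorth (x) (hx : x ∈ (fixedPts (fun t => sumOp (U₁ t) (U₂ t)))ᗮ) : B x = 0 := by
    have hx₁ : x.fst ∈ (fixedPts U₁)ᗮ := fun u hu => by
      simpa using (Submodule.mem_orthogonal _ x).1 hx (sumInl u)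
        (mem_fixedPts_sumOp.2 ⟨hu, zero_mem _⟩)
    simp [B, P, Submodule.orthogonalProjectionOnto_apply_of_mem_orthogonal hx₁]
  have hBcomm (g : G) (hg : ∀ t, α t g = g) (x)
      (hx : x ∈ fixedPts (fun t => sumOp (U₁ t) (U₂ t))) :
      B (sumOp (π₁ g) (π₂ g) x) = sumOp (π₁ g) (π₂ g) (B x) := by
    have hx₁ := (mem_fixedPts_sumOp.1 hx).1
    have hgx₁ := map_mem_fixedPts_of_covariant hcov₁ hg hx₁
    have hP (y) (hy : y ∈ fixedPts U₁) : P y = ⟨y, hy⟩ :=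
      Submodule.orthogonalProjectionOnto_mem_subspace_eq_self ⟨y, hy⟩
    simp only [B, ContinuousLinearMap.comp_apply, WithLp.fstL_apply, sumOp_fst, sumOp_sumInr,
      hP _ hx₁, hP _ hgx₁, Submodule.subtypeL_apply, hV g hg ⟨_, hx₁⟩ ⟨_, hgx₁⟩ rfl]
  obtain ⟨A, hAπ, hAB⟩ := hstrict B hBmem hBorth hBcomm
  refine ⟨WithLp.sndL 2 ℂ H₁ H₂ ∘L A ∘L sumInl, fun g x => ?_, fun x => ?_⟩
  · simp only [ContinuousLinearMap.comp_apply, WithLp.sndL_apply, ← sumOp_sumInl (π₁ g) (π₂ g),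
      ← mul_apply_eq_comp, hAπ]
    rfl
  · have hx : sumInl (x : H₁) ∈ fixedPts (fun t => sumOp (U₁ t) (U₂ t)) :=
      mem_fixedPts_sumOp.2 ⟨x.2, zero_mem _⟩
    simp [hAB _ hx, B, P]

end Intertwiners

/-- **Strictness implies the unique extension property** (cf. Prop. 2.17).
Let `G` be a group with `ℝ`-action `α` and suppose that every ground state representation
of `(G,α)` is strict.  Then for any two ground state representations `(π₁,H₁)`, `(π₂,H₂)`
of `(G,α)` and any unitary `G⁰`-equivalence `V : H₁⁰ → H₂⁰` of the minimal energy spaces,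
there exists a unique unitary `G`-equivalence `Φ : H₁ → H₂` extending `V`. -/
theorem stmt_10 {G : Type u_1} [Group G] (α : ℝ → G → G)
    (hstrict : ∀ (K : Type u_2) [NormedAddCommGroup K] [InnerProductSpace ℂ K]
      [CompleteSpace K] (π : G → K →L[ℂ] K) (U : ℝ → K →L[ℂ] K),
      IsGroundStateRep α π U → IsStrict α π U)
    {H₁ H₂ : Type u_2}
    [NormedAddCommGroup H₁] [InnerProductSpace ℂ H₁] [CompleteSpace H₁]
    [NormedAddCommGroup H₂] [InnerProductSpace ℂ H₂] [CompleteSpace H₂]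
    (π₁ : G → H₁ →L[ℂ] H₁) (U₁ : ℝ → H₁ →L[ℂ] H₁)
    (π₂ : G → H₂ →L[ℂ] H₂) (U₂ : ℝ → H₂ →L[ℂ] H₂)
    (h₁ : IsGroundStateRep α π₁ U₁) (h₂ : IsGroundStateRep α π₂ U₂)
    -- a unitary `G⁰`-equivalence of the minimal energy spaces
    (V : (fixedPts U₁) ≃ₗᵢ[ℂ] (fixedPts U₂))
    (hV : ∀ g : G, (∀ t : ℝ, α t g = g) →
      ∀ x y : fixedPts U₁, (y : H₁) = π₁ g (x : H₁) → (V y : H₂) = π₂ g (V x : H₂)) :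
    ∃! Φ : H₁ →L[ℂ] H₂,
      (∀ x : H₁, ‖Φ x‖ = ‖x‖) ∧ Function.Surjective Φ ∧
      (∀ (g : G) (x : H₁), Φ (π₁ g x) = π₂ g (Φ x)) ∧
      (∀ x : fixedPts U₁, Φ (x : H₁) = (V x : H₂)) := by
  obtain ⟨T, hTπ, hTV⟩ := (hstrict _ _ _ (h₁.sum h₂)).exists_intertwiner_extending
    h₁.covariant (V : fixedPts U₁ →L[ℂ] fixedPts U₂) hV
  have hTU := h₁.intertwines_U_of_mapsTo_fixedPts h₂ hTπ fun x hx => hTV ⟨x, hx⟩ ▸ (V ⟨x, hx⟩).2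
  have hT'π (g : G) :=
    adjoint_intertwines_of_mem_unitary (h₁.mem_unitary g) (h₂.mem_unitary g) (hTπ g)
  have hT'V := adjoint_apply_eq_symm_of_extends V hTV fun y hy t => by
    rw [← adjoint_intertwines_of_mem_unitary (h₁.U_mem_unitary t) (h₂.U_mem_unitary t) (hTU t),
      hy t]
  have hT'T : adjoint T ∘L T = 1 := eq_of_intertwines_of_eqOn_fixedPts h₁.total
    (fun g x => by simp [hTπ, hT'π]) (fun g x => rfl) fun x hx => by simp [hTV ⟨x, hx⟩, hT'V]
  have hTT' : T ∘L adjoint T = 1 := eq_of_intertwines_of_eqOn_fixedPts h₂.total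
    (fun g x => by simp [hTπ, hT'π]) (fun g x => rfl) fun y hy => by simp [hT'V ⟨y, hy⟩, hTV]
  refine ⟨T, ⟨(norm_map_iff_adjoint_comp_self T).2 hT'T,
    fun y => ⟨adjoint T y, DFunLike.congr_fun hTT' y⟩, hTπ, hTV⟩, ?_⟩
  rintro Φ ⟨-, -, hΦπ, hΦV⟩
  exact eq_of_intertwines_of_eqOn_fixedPts h₁.total hΦπ hTπ fun x hx =>
    (hΦV ⟨x, hx⟩).trans (hTV ⟨x, hx⟩).symm
end

section
/- Let V be a real vector space of countable dimension equipped with the finest locally convex topology, and let α: ℝ → GL(V) be a group homomorphism such that every orbit map t ↦ α_t(v) is continuous. Then every orbit {α_t(v) : t ∈ ℝ, |t| ≤ 1} is contained in a finite dimensional subspace of V, and there exists a locally finite endomorphism D of V such that α_t = e^{tD} for all t ∈ ℝ; in particular each v ∈ V lies in a finite dimensional α-invariant subspace on which t ↦ α_t is smooth. -/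
/-!
Since every seminorm is continuous, so is every linear functional; hence `V` is Hausdorff, and a
compact set spans a finite dimensional subspace, for otherwise it contains an infinite linearly
independent family on which some functional is unbounded. So the spans `S r` of the partial orbits
`{α t v : |t| ≤ r}`, `r ≤ 1`, have bounded dimension, whence `S r = S r'` for some `r < r'`; then
`S r` is invariant under `α s` for `|s| ≤ r' - r`, hence under every `α s`.

On a finite dimensional invariant subspace `α` becomes a continuous one-parameter group `m` of
matrices. It is differentiable, because `m t * ∫₀^τ m = ∫ₜ^{t+τ} m` and `∫₀^τ m` is invertible
for small `τ ≠ 0`; so `m' = m * a` and `m t = exp (t • a)`. The generator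
`D v = lim (α t v - v) / t` therefore exists for every `v`, is linear, and agrees with `a` on each
finite dimensional invariant subspace.
-/

open Submodule Filter Topology intervalIntegral

section OneParameterGroup

variable {A : Type*} [NormedRing A] [NormedAlgebra ℝ A] [CompleteSpace A] {m : ℝ → A}

theorem exists_ne_zero_isUnit_integral (hm : Continuous m) (h0 : m 0 = 1) :
    ∃ τ ≠ 0, IsUnit (∫ s in (0 : ℝ)..τ, m s) := by
  have hslope : Tendsto (fun τ : ℝ => τ⁻¹ • ∫ s in (0 : ℝ)..τ, m s) (𝓝[≠] 0) (𝓝 1) := by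
    have := hasDerivAt_iff_tendsto_slope.mp (hm.integral_hasStrictDerivAt 0 0).hasDerivAt
    rw [h0] at this
    exact this.congr fun τ => by simp [slope_def_module]
  obtain ⟨τ, hτ, hne⟩ :=
    ((hslope.eventually_mem (Units.isOpen.mem_nhds isUnit_one)).and self_mem_nhdsWithin).exists
  refine ⟨τ, hne, ?_⟩
  rw [← one_smul ℝ (∫ s in (0 : ℝ)..τ, m s), ← mul_inv_cancel₀ hne, mul_smul, Algebra.smul_def]
  exact ((isUnit_iff_ne_zero.2 hne).map (algebraMap ℝ A)).mul hτ

theorem exists_hasDerivAt_eq_mul (hm : Continuous m) (h0 : m 0 = 1)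
    (hadd : ∀ s t, m (s + t) = m s * m t) : ∃ a : A, ∀ t, HasDerivAt m (m t * a) t := by
  obtain ⟨τ, -, u, hu⟩ := exists_ne_zero_isUnit_integral hm h0
  set F : ℝ → A := fun t => ∫ s in (0 : ℝ)..t, m s
  have hF : ∀ t, HasDerivAt F (m t) t := fun t => (hm.integral_hasStrictDerivAt 0 t).hasDerivAt
  have hmF : ∀ t, m t * F τ = F (t + τ) - F t := fun t => calc
    m t * F τ = ∫ s in (0 : ℝ)..τ, m (t + s) := by
      simp only [F, hadd]
      exact ((ContinuousLinearMap.mul ℝ A (m t)).intervalIntegral_comp_comm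
        (hm.intervalIntegrable 0 τ)).symm
    _ = F (t + τ) - F t := by
      rw [integral_comp_add_left, add_zero, integral_interval_sub_left]
      all_goals exact hm.intervalIntegrable _ _
  replace hu : (u : A) = F τ := hu
  have hm_eq : m = fun t => (F (t + τ) - F t) * ↑u⁻¹ := funext fun t => by
    rw [← hmF, ← hu, Units.mul_inv_cancel_right]
  refine ⟨(m τ - 1) * ↑u⁻¹, fun t => ?_⟩
  have hderiv : HasDerivAt (fun t => (F (t + τ) - F t) * ↑u⁻¹) ((m (t + τ) - m t) * ↑u⁻¹) t :=
    (((hF (t + τ)).comp_add_const t τ).sub (hF t)).mul_const _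
  rw [← hm_eq, hadd, ← mul_sub_one, mul_assoc] at hderiv
  exact hderiv

theorem eq_exp_of_hasDerivAt_eq_mul (h0 : m 0 = 1) {a : A}
    (hm : ∀ t, HasDerivAt m (m t * a) t) (t : ℝ) : m t = NormedSpace.exp (t • a) := by
  have hconst : ∀ t, HasDerivAt (fun t => m t * NormedSpace.exp (t • -a)) 0 t := fun t => by
    have h := (hm t).mul (hasDerivAt_exp_smul_const (-a) t)
    have hcomm : Commute a (NormedSpace.exp (t • -a)) :=
      ((Commute.refl a).neg_right.smul_right t).exp_right
    rwa [mul_neg, mul_neg, mul_assoc, hcomm.eq, add_neg_cancel] at h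
  have h1 : m t * NormedSpace.exp (t • -a) = 1 := by
    simpa [h0] using is_const_of_deriv_eq_zero (fun s => (hconst s).differentiableAt)
      (fun s => (hconst s).deriv) t 0
  have hradius : ∀ x : A, x ∈ Metric.eball (0 : A) (NormedSpace.expSeries ℝ A).radius :=
    fun x => (NormedSpace.expSeries_radius_eq_top ℝ A).symm ▸ edist_lt_top _ _
  have h2 : NormedSpace.exp (t • -a) * NormedSpace.exp (t • a) = 1 := by
    rw [← NormedSpace.exp_add_of_commute_of_mem_ball (𝕂 := ℝ)
      (((Commute.refl a).neg_left.smul_left t).smul_right t) (hradius _) (hradius _)]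
    simp
  rw [← one_mul (NormedSpace.exp _), ← h1, mul_assoc, h2, mul_one]

theorem exists_eq_exp_of_continuous_of_map_add (hm : Continuous m) (h0 : m 0 = 1)
    (hadd : ∀ s t, m (s + t) = m s * m t) :
    ∃ a : A, HasDerivAt m a 0 ∧ ∀ t, m t = NormedSpace.exp (t • a) := by
  obtain ⟨a, ha⟩ := exists_hasDerivAt_eq_mul hm h0 hadd
  exact ⟨a, by simpa [h0] using ha 0, eq_exp_of_hasDerivAt_eq_mul h0 ha⟩

end OneParameterGroup

section FiniteDimensional

attribute [local instance] Matrix.linftyOpNormedRing Matrix.linftyOpNormedAlgebra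

variable {E : Type*} [AddCommGroup E] [Module ℝ E] [TopologicalSpace E] [IsTopologicalAddGroup E]
  [ContinuousSMul ℝ E] [T2Space E] [FiniteDimensional ℝ E]

theorem exists_tendsto_slope_and_hasSum_of_finiteDimensional (α : ℝ → E →ₗ[ℝ] E)
    (hα0 : α 0 = LinearMap.id) (hαadd : ∀ s t, α (s + t) = (α s).comp (α t))
    (hcont : ∀ w, Continuous fun t => α t w) :
    ∃ B : E →ₗ[ℝ] E, ∀ w, Tendsto (slope (fun t => α t w) 0) (𝓝[≠] 0) (𝓝 (B w)) ∧
      ∀ t : ℝ, HasSum (fun n : ℕ => (t ^ n / (n.factorial : ℝ)) • (B ^ n) w) (α t w) := by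
  let b := Module.finBasis ℝ E
  let Φ := LinearMap.toMatrixAlgEquiv b
  have hm : Continuous fun t => Φ (α t) := by
    refine continuous_matrix fun i j => ?_
    simp only [Φ, LinearMap.toMatrixAlgEquiv_apply]
    exact (LinearMap.continuous_of_finiteDimensional (b.coord i)).comp (hcont (b j))
  obtain ⟨a, ha', ha⟩ := exists_eq_exp_of_continuous_of_map_add hm
    (by rw [hα0]; exact map_one Φ) (fun s t => by rw [hαadd]; exact map_mul Φ _ _)
  let ev (w : E) : Matrix _ _ ℝ →L[ℝ] E :=
    LinearMap.toContinuousLinearMap ((LinearMap.applyₗ w).comp Φ.symm.toLinearMap)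
  have hev : ∀ w t, ev w (Φ (α t)) = α t w := fun w t => by simp [ev]
  refine ⟨Φ.symm a, fun w => ⟨?_, fun t => ?_⟩⟩
  · have hslope : ∀ τ : ℝ, ev w (slope (fun t => Φ (α t)) 0 τ) = slope (fun t => α t w) 0 τ :=
      fun τ => by
        rw [← ContinuousLinearMap.coe_coe, ← LinearMap.slope_comp]
        exact congrArg (slope · 0 τ) (funext (hev w))
    simpa [ev] using (((ev w).continuous.tendsto a).comp
      (hasDerivAt_iff_tendsto_slope.mp ha')).congr hslope
  · have := (NormedSpace.exp_series_hasSum_exp' (𝕂 := ℝ) (t • a)).mapL (ev w)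
    convert this using 1
    · funext n
      simp [ev, smul_pow, smul_smul, div_eq_inv_mul, mul_comm]
    · rw [← ha, hev]

end FiniteDimensional

theorem exists_dual_not_bddAbove_image {V : Type*} [AddCommGroup V] [Module ℝ V] {s : Set V}
    (hli : LinearIndepOn ℝ id s) (hs : s.Infinite) : ∃ φ : Module.Dual ℝ V, ¬BddAbove (φ '' s) := by
  let e₀ := Set.Infinite.natEmbedding s hs
  let e : ℕ → hli.extend (Set.subset_univ s) := fun n => ⟨e₀ n, hli.subset_extend _ (e₀ n).2⟩
  have he : e.Injective := fun m n h =>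
    e₀.injective <| Subtype.ext <| by simpa [e] using congrArg Subtype.val h
  refine ⟨(Module.Basis.extend hli).constr ℝ fun i => ((Function.invFun e i : ℕ) : ℝ), ?_⟩
  rintro ⟨C, hC⟩
  obtain ⟨n, hn⟩ := exists_nat_gt C
  refine hn.not_ge (hC ⟨_, (e₀ n).2, ?_⟩)
  rw [show ((e₀ n : s) : V) = Module.Basis.extend hli (e n) from
    (Module.Basis.extend_apply_self hli (e n)).symm, Module.Basis.constr_basis,
    Function.leftInverse_invFun he n]

section FinestLocallyConvex

variable {V : Type*} [AddCommGroup V] [Module ℝ V] [TopologicalSpace V] [IsTopologicalAddGroup V]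

theorem continuous_dual_of_forall_seminorm_continuous
    (hfinest : ∀ p : Seminorm ℝ V, Continuous p) (φ : Module.Dual ℝ V) : Continuous φ := by
  refine continuous_of_continuousAt_zero φ ?_
  rw [ContinuousAt, map_zero, tendsto_zero_iff_norm_tendsto_zero]
  have h := (hfinest ((normSeminorm ℝ ℝ).comp φ)).tendsto 0
  rwa [map_zero] at h

theorem t2Space_of_forall_seminorm_continuous (hfinest : ∀ p : Seminorm ℝ V, Continuous p) :
    T2Space V :=
  .of_injective_continuous (f := fun (v : V) (φ : Module.Dual ℝ V) => φ v)
    (fun _ _ h => Module.eval_apply_injective ℝ (LinearMap.ext (congrFun h)))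
    (continuous_pi (continuous_dual_of_forall_seminorm_continuous hfinest))

theorem finiteDimensional_span_of_isCompact (hfinest : ∀ p : Seminorm ℝ V, Continuous p)
    {K : Set V} (hK : IsCompact K) : FiniteDimensional ℝ (span ℝ K) := by
  obtain ⟨s, hsK, hspan, hli⟩ := exists_linearIndependent ℝ K
  rw [← hspan]
  by_contra hinf
  have hs : s.Infinite := fun hfin => hinf (FiniteDimensional.span_of_finite ℝ hfin)
  obtain ⟨φ, hφ⟩ := exists_dual_not_bddAbove_image hli hs
  exact hφ ((hK.image (continuous_dual_of_forall_seminorm_continuous hfinest φ)).bddAbove.mono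
    (Set.image_mono hsK))

end FinestLocallyConvex

section OrbitSpan

variable {V : Type*} [AddCommGroup V] [Module ℝ V] {α : ℝ → V →ₗ[ℝ] V}

def orbitSpan (α : ℝ → V →ₗ[ℝ] V) (v : V) (r : ℝ) : Submodule ℝ V :=
  span ℝ ((fun t => α t v) '' Set.Icc (-r) r)

theorem orbitSpan_mono (α : ℝ → V →ₗ[ℝ] V) (v : V) : Monotone (orbitSpan α v) :=
  fun _ _ h => span_mono (Set.image_mono (Set.Icc_subset_Icc (neg_le_neg h) h))

theorem map_orbitSpan_le (hαadd : ∀ s t, α (s + t) = (α s).comp (α t)) (v : V)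
    {r r' s : ℝ} (hs : |s| ≤ r' - r) : (orbitSpan α v r).map (α s) ≤ orbitSpan α v r' := by
  rw [orbitSpan, map_span, Set.image_image]
  refine span_mono ?_
  rintro _ ⟨t, ⟨ht₁, ht₂⟩, rfl⟩
  obtain ⟨hs₁, hs₂⟩ := abs_le.1 hs
  exact ⟨s + t, ⟨by linarith, by linarith⟩, by simp [hαadd]⟩

theorem exists_orbitSpan_eq (v : V) (hfd : FiniteDimensional ℝ (orbitSpan α v 1)) :
    ∃ r r', 0 ≤ r ∧ r < r' ∧ r' ≤ 1 ∧ orbitSpan α v r' = orbitSpan α v r := by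
  let d : ℝ → ℕ := fun r => Module.finrank ℝ (orbitSpan α v r)
  have hbdd : BddAbove (d '' Set.Ico 0 1) :=
    ⟨d 1, Set.forall_mem_image.2 fun r hr => Submodule.finrank_mono (orbitSpan_mono α v hr.2.le)⟩
  have h0 : (0 : ℝ) ∈ Set.Ico 0 1 := ⟨le_rfl, one_pos⟩
  obtain ⟨r, ⟨hr₀, hr₁⟩, hr⟩ := Nat.sSup_mem ⟨d 0, Set.mem_image_of_mem d h0⟩ hbdd
  have hr' : (r + 1) / 2 ∈ Set.Ico (0 : ℝ) 1 := ⟨by linarith, by linarith⟩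
  have : FiniteDimensional ℝ (orbitSpan α v ((r + 1) / 2)) :=
    Submodule.finiteDimensional_of_le (orbitSpan_mono α v hr'.2.le)
  refine ⟨r, (r + 1) / 2, hr₀, by linarith, hr'.2.le, (Submodule.eq_of_le_of_finrank_le
    (orbitSpan_mono α v (by linarith)) ?_).symm⟩
  change d _ ≤ d r
  rw [hr]
  exact le_csSup hbdd (Set.mem_image_of_mem d hr')

theorem forall_mem_of_forall_abs_le (hαadd : ∀ s t, α (s + t) = (α s).comp (α t))
    {W : Submodule ℝ V} {δ : ℝ} (hδ : 0 < δ) (hW : ∀ s, |s| ≤ δ → ∀ w ∈ W, α s w ∈ W) (s : ℝ) :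
    ∀ w ∈ W, α s w ∈ W := by
  obtain ⟨n, hn⟩ := exists_nat_gt (|s| / δ)
  set u := s / (n + 1)
  have hu : |u| ≤ δ := by
    rw [abs_div, div_le_iff₀ (by positivity), abs_of_pos (by positivity : (0 : ℝ) < n + 1)]
    rw [div_lt_iff₀ hδ] at hn
    nlinarith
  have key : ∀ k : ℕ, ∀ w ∈ W, α ((k + 1) * u) w ∈ W := by
    intro k
    induction k with
    | zero => simpa using hW u hu
    | succ k ih =>
      intro w hw
      rw [show ((k + 1 : ℕ) + 1 : ℝ) * u = u + (k + 1) * u by push_cast; ring, hαadd]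
      exact hW u hu _ (ih w hw)
  simpa [u, mul_div_cancel₀ s (by positivity : (n + 1 : ℝ) ≠ 0)] using key n

theorem exists_finiteDimensional_invariant (hα0 : α 0 = LinearMap.id)
    (hαadd : ∀ s t, α (s + t) = (α s).comp (α t)) (v : V)
    (hfd : FiniteDimensional ℝ (orbitSpan α v 1)) :
    ∃ W : Submodule ℝ V, FiniteDimensional ℝ W ∧ v ∈ W ∧ ∀ t, ∀ w ∈ W, α t w ∈ W := by
  obtain ⟨r, r', hr, hrr', hr', heq⟩ := exists_orbitSpan_eq v hfd
  refine ⟨orbitSpan α v r,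
    Submodule.finiteDimensional_of_le (orbitSpan_mono α v (show r ≤ 1 by linarith)),
    subset_span ⟨0, ⟨by linarith, hr⟩, by simp [hα0]⟩,
    forall_mem_of_forall_abs_le hαadd (sub_pos.2 hrr') fun s hs w hw => ?_⟩
  rw [← heq]
  exact map_orbitSpan_le hαadd v hs (mem_map_of_mem hw)

end OrbitSpan

section Generator

variable {V : Type*} [AddCommGroup V] [Module ℝ V] [TopologicalSpace V] [IsTopologicalAddGroup V]
  [ContinuousSMul ℝ V] [T2Space V] {α : ℝ → V →ₗ[ℝ] V}

theorem exists_tendsto_slope_and_hasSum_of_invariant (hα0 : α 0 = LinearMap.id)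
    (hαadd : ∀ s t, α (s + t) = (α s).comp (α t)) (hcont : ∀ v, Continuous fun t => α t v)
    (W : Submodule ℝ V) [FiniteDimensional ℝ W] (hW : ∀ t, ∀ w ∈ W, α t w ∈ W) :
    ∃ B : W →ₗ[ℝ] W, ∀ w : W, Tendsto (slope (fun t => α t w) 0) (𝓝[≠] 0) (𝓝 (B w : V)) ∧
      ∀ t : ℝ, HasSum (fun n : ℕ => (t ^ n / (n.factorial : ℝ)) • ((B ^ n) w : V)) (α t w) := by
  obtain ⟨B, hB⟩ := exists_tendsto_slope_and_hasSum_of_finiteDimensional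
    (fun t => (α t).restrict (hW t)) (by ext; simp [hα0]) (fun s t => by ext; simp [hαadd])
    fun w => (hcont w).subtype_mk _
  refine ⟨B, fun w => ⟨?_, fun t => ((hB w).2 t).map W.subtype continuous_subtype_val⟩⟩
  refine ((continuous_subtype_val.tendsto _).comp (hB w).1).congr fun τ => ?_
  rw [Function.comp_apply, ← W.coe_subtype, ← LinearMap.slope_comp]
  rfl

theorem exists_locallyFinite_generator (hα0 : α 0 = LinearMap.id)
    (hαadd : ∀ s t, α (s + t) = (α s).comp (α t)) (hcont : ∀ v, Continuous fun t => α t v)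
    (hinv : ∀ v, ∃ W : Submodule ℝ V, FiniteDimensional ℝ W ∧ v ∈ W ∧ ∀ t, ∀ w ∈ W, α t w ∈ W) :
    ∃ D : V →ₗ[ℝ] V,
      (∀ v, ∃ W : Submodule ℝ V, FiniteDimensional ℝ W ∧ v ∈ W ∧ ∀ w ∈ W, D w ∈ W) ∧
      ∀ (t : ℝ) v, HasSum (fun n : ℕ => (t ^ n / (n.factorial : ℝ)) • (D ^ n) v) (α t v) := by
  choose W hfd hv hW using hinv
  choose B hB using fun v =>
    have := hfd v
    exists_tendsto_slope_and_hasSum_of_invariant hα0 hαadd hcont (W v) (hW v)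
  let D := linearMapOfTendsto (l := 𝓝[≠] 0) (fun v => (B v ⟨v, hv v⟩ : V))
    (fun t : ℝ => t⁻¹ • (α t - α 0))
    (tendsto_pi_nhds.2 fun v => (hB v _).1.congr fun t => by simp [slope_def_module])
  have hDB : ∀ v (w : W v), D w = B v w := fun v w =>
    tendsto_nhds_unique (hB w ⟨w, hv w⟩).1 (hB v w).1
  have hpow : ∀ v (n : ℕ) (w : W v), (D ^ n) w = (B v ^ n) w := fun v n => by
    induction n with
    | zero => simp
    | succ n ih => intro w; rw [pow_succ', pow_succ', Module.End.mul_apply, ih, hDB]; rfl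
  refine ⟨D, fun v => ⟨W v, hfd v, hv v, fun w hw => hDB v ⟨w, hw⟩ ▸ (B v ⟨w, hw⟩).2⟩,
    fun t v => ?_⟩
  simpa only [hpow v _ ⟨v, hv v⟩] using (hB v ⟨v, hv v⟩).2 t

end Generator

theorem stmt_15_general {V : Type*} [AddCommGroup V] [Module ℝ V]
    [TopologicalSpace V] [IsTopologicalAddGroup V] [ContinuousSMul ℝ V]
    -- the finest locally convex topology: every seminorm is continuous
    (hfinest : ∀ p : Seminorm ℝ V, Continuous p)
    (α : ℝ → V →ₗ[ℝ] V)
    (hα0 : α 0 = LinearMap.id)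
    (hαadd : ∀ s t : ℝ, α (s + t) = (α s).comp (α t))
    (hcont : ∀ v : V, Continuous fun t : ℝ => α t v) :
    -- (i) partial orbits lie in finite dimensional subspaces
    (∀ v : V, ∃ W : Submodule ℝ V, FiniteDimensional ℝ W ∧
      ∀ t : ℝ, |t| ≤ 1 → α t v ∈ W) ∧
    -- (ii) `α_t = e^{tD}` for a locally finite endomorphism `D`
    (∃ D : V →ₗ[ℝ] V,
      (∀ v : V, ∃ W : Submodule ℝ V, FiniteDimensional ℝ W ∧ v ∈ W ∧
        ∀ w ∈ W, D w ∈ W) ∧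
      (∀ (t : ℝ) (v : V),
        HasSum (fun n : ℕ => (t ^ n / (n.factorial : ℝ)) • ((D ^ n) v)) (α t v)) ∧
      -- every `v` lies in a finite dimensional `α`-invariant subspace
      (∀ v : V, ∃ W : Submodule ℝ V, FiniteDimensional ℝ W ∧ v ∈ W ∧
        ∀ (t : ℝ), ∀ w ∈ W, α t w ∈ W)) := by
  have := t2Space_of_forall_seminorm_continuous hfinest
  have horbit : ∀ v, FiniteDimensional ℝ (orbitSpan α v 1) := fun v =>
    finiteDimensional_span_of_isCompact hfinest (isCompact_Icc.image (hcont v))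
  have hinv := fun v => exists_finiteDimensional_invariant hα0 hαadd v (horbit v)
  obtain ⟨D, hD, hsum⟩ := exists_locallyFinite_generator hα0 hαadd hcont hinv
  exact ⟨fun v => ⟨_, horbit v, fun t ht => subset_span ⟨t, abs_le.1 ht, rfl⟩⟩, D, hD, hsum, hinv⟩

/-- **One-parameter groups on spaces with the finest locally convex topology**
(cf. Prop. D.1).  Let `V` be a real vector space of countable dimension, equipped with
the finest locally convex topology (every seminorm is continuous), and let
`α : ℝ → GL(V)` be a group homomorphism whose orbit maps `t ↦ α_t(v)` are continuous.
Then every partial orbit `{α_t(v) : |t| ≤ 1}` lies in a finite dimensional subspace,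
and there exists a locally finite endomorphism `D` of `V` with `α_t = e^{tD}` for all
`t ∈ ℝ`; in particular every `v ∈ V` lies in a finite dimensional `α`-invariant
subspace. -/
theorem stmt_15 {V : Type*} [AddCommGroup V] [Module ℝ V]
    [TopologicalSpace V] [IsTopologicalAddGroup V] [ContinuousSMul ℝ V]
    -- the finest locally convex topology: every seminorm is continuous
    (hfinest : ∀ p : Seminorm ℝ V, Continuous p)
    -- countable dimension
    (hcount : ∃ s : Set V, s.Countable ∧ Submodule.span ℝ s = ⊤)
    (α : ℝ → V →ₗ[ℝ] V)
    (hα0 : α 0 = LinearMap.id)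
    (hαadd : ∀ s t : ℝ, α (s + t) = (α s).comp (α t))
    (hcont : ∀ v : V, Continuous fun t : ℝ => α t v) :
    -- (i) partial orbits lie in finite dimensional subspaces
    (∀ v : V, ∃ W : Submodule ℝ V, FiniteDimensional ℝ W ∧
      ∀ t : ℝ, |t| ≤ 1 → α t v ∈ W) ∧
    -- (ii) `α_t = e^{tD}` for a locally finite endomorphism `D`
    (∃ D : V →ₗ[ℝ] V,
      (∀ v : V, ∃ W : Submodule ℝ V, FiniteDimensional ℝ W ∧ v ∈ W ∧
        ∀ w ∈ W, D w ∈ W) ∧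
      (∀ (t : ℝ) (v : V),
        HasSum (fun n : ℕ => (t ^ n / (n.factorial : ℝ)) • ((D ^ n) v)) (α t v)) ∧
      -- every `v` lies in a finite dimensional `α`-invariant subspace
      (∀ v : V, ∃ W : Submodule ℝ V, FiniteDimensional ℝ W ∧ v ∈ W ∧
        ∀ (t : ℝ), ∀ w ∈ W, α t w ∈ W)) :=
  stmt_15_general hfinest α hα0 hαadd hcont
end
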